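/- Binary search case 2: in the same setting, with k ≥ 2 and t' the second-largest element of 𝒯 = ∪_i T_i, if x ≤ t', then either every minimizer S (containing s) of [w, w_s, w_s^{<x}](cut(·)) satisfies w_s^{<x}(cut(S)) < |V∖S| − 1, or there exist at least two distinct minimizers of [w, w_s, w_s^{<x}](cut(·)). -/

import Mathlib

open Finset
open scoped Classical

/-- The weight of the cut induced by `S`. -/
noncomputable def cutWeight {V : Type*} (E : Finset (Sym2 V)) (w : Sym2 V → ℕ)
    (S : Finset V) : ℕ :=
  ∑ e ∈ E.filter (fun e => (∃ u ∈ e, u ∈ S) ∧ ∃ u ∈ e, u ∉ S), w e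

/-- Indicator weight of edges incident to `s` (the star at `s`). -/
noncomputable def starWeight {V : Type*} (s : V) : Sym2 V → ℕ :=
  fun e => if s ∈ e then 1 else 0

/-- Indicator weight of star edges `(s, v)` with `v < x`. -/
noncomputable def ltWeight {V : Type*} [LT V] (s x : V) : Sym2 V → ℕ :=
  fun e => if ∃ v : V, v < x ∧ e = Sym2.mk s v then 1 else 0

/-- `S` is a global minimum cut-set of `(V, E)` with respect to the weights `f`. -/
def IsMinCutSet {V : Type*} [Fintype V] (E : Finset (Sym2 V)) (f : Sym2 V → ℕ)
    (S : Finset V) : Prop :=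
  S.Nonempty ∧ S ≠ Finset.univ ∧ ∀ T : Finset V, T.Nonempty → T ≠ Finset.univ →
    cutWeight E f S ≤ cutWeight E f T

/-- The stitched weight `[w, w_s]` (with bound `n = |V|`). -/
noncomputable def stitch1 {V : Type*} [Fintype V] (w : Sym2 V → ℕ) (s : V) :
    Sym2 V → ℕ :=
  fun e => (Fintype.card V + 1) * w e + starWeight s e

/-- The triple-stitched weight `[w, w_s, w_s^{<x}]` (with bound `n = |V|`). -/
noncomputable def stitch2 {V : Type*} [Fintype V] [LT V] (w : Sym2 V → ℕ) (s x : V) :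
    Sym2 V → ℕ :=
  fun e => (Fintype.card V + 1) * stitch1 w s e + ltWeight s x e

/-!
The weight `[[w, w_s], w_s^{<x}]` is lexicographic: its minimizers are the minimizers of
`[w, w_s]` that minimize `w_s^{<x}(cut S)`, and all sides `S ∋ s` of minimizers of `[w, w_s]`
leave out the same number `m` of vertices. On such a side, `w_s^{<x}(cut S)` is `m` minus the
number of left-out vertices `v ≥ x`. So if some minimizer `S₀` has `w_s^{<x}(cut S₀) ≥ m - 1`,
every side leaves out at most one vertex `≥ x`, and every side leaving out one is a minimizer
too. The sides leaving out `t'` and `tmax` (both `≥ x`) are then two distinct minimizers.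
-/

noncomputable def starIndicator {V : Type*} (s : V) (q : V → Prop) : Sym2 V → ℕ :=
  fun e => if ∃ v, q v ∧ e = s(s, v) then 1 else 0

section Cut

variable {V : Type*} (E : Finset (Sym2 V))

lemma starWeight_eq_starIndicator (s : V) : starWeight s = starIndicator s fun _ => True := by
  ext e
  simp only [starWeight, starIndicator, true_and, Sym2.mem_iff_exists]

lemma ltWeight_eq_starIndicator [LT V] (s x : V) : ltWeight s x = starIndicator s (· < x) := rfl

lemma cutWeight_mul_add (c : ℕ) (f g : Sym2 V → ℕ) (S : Finset V) :
    cutWeight E (fun e => c * f e + g e) S = c * cutWeight E f S + cutWeight E g S := by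
  rw [cutWeight, cutWeight, cutWeight, mul_sum, ← sum_add_distrib]

lemma cutWeight_le_sum (f : Sym2 V → ℕ) (S : Finset V) : cutWeight E f S ≤ ∑ e ∈ E, f e :=
  sum_le_sum_of_subset (filter_subset _ _)

lemma sum_starIndicator (s : V) (q : V → Prop) (F : Finset (Sym2 V)) :
    ∑ e ∈ F, starIndicator s q e = #(F.filter fun e => ∃ v, q v ∧ e = s(s, v)) := by
  simp only [starIndicator, sum_boole, Nat.cast_id]

lemma cutWeight_starIndicator_le_card [Fintype V] (s : V) (q : V → Prop) (S : Finset V) :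
    cutWeight E (starIndicator s q) S ≤ Fintype.card V := by
  refine (cutWeight_le_sum E _ S).trans ?_
  rw [sum_starIndicator, ← card_univ, ← card_map (Sym2.mkEmbedding s)]
  refine card_le_card fun e he => ?_
  simp only [mem_filter] at he
  obtain ⟨-, v, -, rfl⟩ := he
  exact mem_map_of_mem _ (mem_univ v)

/-- The star edges crossing the cut of `S ∋ s` are exactly the `s(s, v)` with `v ∉ S`. -/
lemma cutWeight_starIndicator [Fintype V] [DecidableEq V] {s : V}
    (hstar : ∀ v, v ≠ s → s(s, v) ∈ E) (q : V → Prop) [DecidablePred q] {S : Finset V}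
    (hs : s ∈ S) :
    cutWeight E (starIndicator s q) S = #((univ \ S).filter q) := by
  rw [cutWeight, sum_starIndicator, filter_filter, ← card_map (Sym2.mkEmbedding s)]
  congr 1
  ext e
  simp only [mem_filter, mem_map, mem_sdiff, mem_univ, true_and, Sym2.mkEmbedding_apply]
  constructor
  · rintro ⟨-, ⟨-, u, hu, huS⟩, v, hqv, rfl⟩
    have hvS : v ∉ S := by
      rcases Sym2.mem_iff.mp hu with rfl | rfl
      exacts [absurd hs huS, huS]
    exact ⟨v, ⟨hvS, hqv⟩, rfl⟩
  · rintro ⟨v, ⟨hvS, hqv⟩, rfl⟩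
    have hvs : v ≠ s := by rintro rfl; exact hvS hs
    exact ⟨hstar v hvs, ⟨⟨s, Sym2.mem_mk_left s v, hs⟩, v, Sym2.mem_mk_right s v, hvS⟩,
      v, hqv, rfl⟩

end Cut

section Lexicographic

variable {V : Type*} [Fintype V] {E : Finset (Sym2 V)} {f g : Sym2 V → ℕ} {c : ℕ}
  {S T : Finset V}

lemma IsMinCutSet.cutWeight_eq (hS : IsMinCutSet E f S) (hT : IsMinCutSet E f T) :
    cutWeight E f S = cutWeight E f T :=
  le_antisymm (hS.2.2 T hT.1 hT.2.1) (hT.2.2 S hS.1 hS.2.1)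

lemma IsMinCutSet.of_mul_add (hg : ∀ T, cutWeight E g T < c)
    (h : IsMinCutSet E (fun e => c * f e + g e) S) : IsMinCutSet E f S := by
  refine ⟨h.1, h.2.1, fun T hT hTu => ?_⟩
  have hST := h.2.2 T hT hTu
  rw [cutWeight_mul_add, cutWeight_mul_add] at hST
  by_contra! hlt
  have hmul : c * (cutWeight E f T + 1) ≤ c * cutWeight E f S := Nat.mul_le_mul_left c hlt
  linarith [hg T]

lemma IsMinCutSet.cutWeight_eq_of_mul_add (hg : ∀ T, cutWeight E g T < c)
    (hS : IsMinCutSet E (fun e => c * f e + g e) S)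
    (hT : IsMinCutSet E (fun e => c * f e + g e) T) : cutWeight E g S = cutWeight E g T := by
  have h := hS.cutWeight_eq hT
  rw [cutWeight_mul_add, cutWeight_mul_add, (hS.of_mul_add hg).cutWeight_eq (hT.of_mul_add hg)]
    at h
  exact Nat.add_left_cancel h

lemma IsMinCutSet.cutWeight_le_of_mul_add (h : IsMinCutSet E (fun e => c * f e + g e) S)
    (hS : IsMinCutSet E f S) (hT : IsMinCutSet E f T) : cutWeight E g S ≤ cutWeight E g T := by
  have hST := h.2.2 T hT.1 hT.2.1
  rw [cutWeight_mul_add, cutWeight_mul_add, hS.cutWeight_eq hT] at hST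
  exact Nat.le_of_add_le_add_left hST

lemma IsMinCutSet.mul_add_of_cutWeight_eq (h : IsMinCutSet E (fun e => c * f e + g e) S)
    (hS : IsMinCutSet E f S) (hT : IsMinCutSet E f T) (hg : cutWeight E g T = cutWeight E g S) :
    IsMinCutSet E (fun e => c * f e + g e) T := by
  have hTS : cutWeight E (fun e => c * f e + g e) T = cutWeight E (fun e => c * f e + g e) S := by
    rw [cutWeight_mul_add, cutWeight_mul_add, hS.cutWeight_eq hT, hg]
  exact ⟨hT.1, hT.2.1, fun U hU hUu => hTS ▸ h.2.2 U hU hUu⟩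

end Lexicographic

section Stitch

variable {V : Type*} [Fintype V] {E : Finset (Sym2 V)} {w : Sym2 V → ℕ} {s : V}
  {S₀ S T : Finset V}

/-- `w_s` breaks the ties of `w`, and on an `s`-side it counts the vertices left out. -/
lemma IsMinCutSet.card_compl_eq_of_stitch1 [DecidableEq V] (hstar : ∀ v, v ≠ s → s(s, v) ∈ E)
    (hsS : s ∈ S) (hsT : s ∈ T) (hS : IsMinCutSet E (stitch1 w s) S)
    (hT : IsMinCutSet E (stitch1 w s) T) :
    #(univ \ S) = #(univ \ T) := by
  have h := hS.cutWeight_eq_of_mul_add (fun U => ?_) hT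
  · rwa [starWeight_eq_starIndicator, cutWeight_starIndicator E hstar _ hsS,
      cutWeight_starIndicator E hstar _ hsT, filter_true, filter_true] at h
  rw [starWeight_eq_starIndicator]
  exact Nat.lt_succ_of_le (cutWeight_starIndicator_le_card E s _ U)

variable [LinearOrder V] {x : V}

lemma IsMinCutSet.of_stitch2 (h : IsMinCutSet E (stitch2 w s x) S) :
    IsMinCutSet E (stitch1 w s) S :=
  h.of_mul_add fun T => Nat.lt_succ_of_le (cutWeight_starIndicator_le_card E s _ T)

lemma cutWeight_ltWeight_add_card_filter [DecidableEq V] (hstar : ∀ v, v ≠ s → s(s, v) ∈ E)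
    (hsS : s ∈ S) :
    cutWeight E (ltWeight s x) S + #((univ \ S).filter (x ≤ ·)) = #(univ \ S) := by
  simp_rw [ltWeight_eq_starIndicator, cutWeight_starIndicator E hstar _ hsS, ← not_lt]
  exact card_filter_add_card_filter_not _

lemma card_filter_univ_sdiff_le_one [DecidableEq V] (hstar : ∀ v, v ≠ s → s(s, v) ∈ E)
    (hs₀ : s ∈ S₀) (hmin₀ : IsMinCutSet E (stitch2 w s x) S₀)
    (hbig : #(univ \ S₀) ≤ cutWeight E (ltWeight s x) S₀ + 1)
    (hsS : s ∈ S) (hS : IsMinCutSet E (stitch1 w s) S) :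
    #((univ \ S).filter (x ≤ ·)) ≤ 1 := by
  have hle := hmin₀.cutWeight_le_of_mul_add hmin₀.of_stitch2 hS
  have hsum := cutWeight_ltWeight_add_card_filter (x := x) hstar hsS
  have hcard := hS.card_compl_eq_of_stitch1 hstar hsS hs₀ hmin₀.of_stitch2
  omega

lemma isMinCutSet_stitch2_of_notMem [DecidableEq V] (hstar : ∀ v, v ≠ s → s(s, v) ∈ E)
    (hs₀ : s ∈ S₀) (hmin₀ : IsMinCutSet E (stitch2 w s x) S₀)
    (hbig : #(univ \ S₀) ≤ cutWeight E (ltWeight s x) S₀ + 1)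
    (hsS : s ∈ S) (hS : IsMinCutSet E (stitch1 w s) S) {t : V} (ht : t ∉ S) (hxt : x ≤ t) :
    IsMinCutSet E (stitch2 w s x) S := by
  refine hmin₀.mul_add_of_cutWeight_eq hmin₀.of_stitch2 hS ?_
  have hpos : 0 < #((univ \ S).filter (x ≤ ·)) := card_pos.mpr ⟨t, by simp [ht, hxt]⟩
  have hle := hmin₀.cutWeight_le_of_mul_add hmin₀.of_stitch2 hS
  have hsum := cutWeight_ltWeight_add_card_filter (x := x) hstar hsS
  have hcard := hS.card_compl_eq_of_stitch1 hstar hsS hs₀ hmin₀.of_stitch2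
  omega

end Stitch

theorem binary_search_case_two_general (n : ℕ) (E : Finset (Sym2 (Fin n)))
    (w : Sym2 (Fin n) → ℕ) (s : Fin n)
    (hstar : ∀ v : Fin n, v ≠ s → Sym2.mk s v ∈ E)
    (tmax t' : Fin n)
    (hmax : ∃ S : Finset (Fin n), s ∈ S ∧ IsMinCutSet E (stitch1 w s) S ∧ tmax ∉ S)
    (ht' : ∃ S : Finset (Fin n), s ∈ S ∧ IsMinCutSet E (stitch1 w s) S ∧ t' ∉ S)
    (hlt : t' < tmax)
    (x : Fin n) (hx : x ≤ t') :
    (∀ S : Finset (Fin n), s ∈ S → IsMinCutSet E (stitch2 w s x) S →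
        cutWeight E (ltWeight s x) S + 1 < (Finset.univ \ S).card) ∨
      (∃ A B : Finset (Fin n), s ∈ A ∧ s ∈ B ∧ IsMinCutSet E (stitch2 w s x) A ∧
        IsMinCutSet E (stitch2 w s x) B ∧ A ≠ B) := by
  refine or_iff_not_imp_left.mpr fun h => ?_
  push Not at h
  obtain ⟨S₀, hs₀, hmin₀, hbig⟩ := h
  obtain ⟨S', hs', hS', ht'S'⟩ := ht'
  obtain ⟨Smax, hsmax, hSmax, htmax⟩ := hmax
  refine ⟨S', Smax, hs', hsmax,
    isMinCutSet_stitch2_of_notMem hstar hs₀ hmin₀ hbig hs' hS' ht'S' hx,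
    isMinCutSet_stitch2_of_notMem hstar hs₀ hmin₀ hbig hsmax hSmax htmax (hx.trans hlt.le), ?_⟩
  rintro rfl
  have hpair : {t', tmax} ⊆ (univ \ S').filter (x ≤ ·) := by
    simp [insert_subset_iff, ht'S', htmax, hx, hx.trans hlt.le]
  have := (card_le_card hpair).trans (card_filter_univ_sdiff_le_one hstar hs₀ hmin₀ hbig hs' hS')
  rw [card_pair hlt.ne] at this
  omega

/-- Binary search, case 2: with at least two global minimum cut-sets and x at most
the second-largest separated vertex, either every minimizer S (with s ∈ S) of the
triple-stitched cut weight satisfies w_s^{<x}(cut(S)) < |V ∖ S| - 1, or there are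
at least two distinct such minimizers. -/
theorem binary_search_case_two (n : ℕ) (E : Finset (Sym2 (Fin n)))
    (w : Sym2 (Fin n) → ℕ) (s : Fin n)
    (hstar : ∀ v : Fin n, v ≠ s → Sym2.mk s v ∈ E)
    (S₁ S₂ : Finset (Fin n)) (hs₁ : s ∈ S₁) (hs₂ : s ∈ S₂)
    (hm₁ : IsMinCutSet E (stitch1 w s) S₁) (hm₂ : IsMinCutSet E (stitch1 w s) S₂)
    (hS₁₂ : S₁ ≠ S₂)
    (tmax t' : Fin n)
    (hmax : ∃ S : Finset (Fin n), s ∈ S ∧ IsMinCutSet E (stitch1 w s) S ∧ tmax ∉ S)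
    (ht' : ∃ S : Finset (Fin n), s ∈ S ∧ IsMinCutSet E (stitch1 w s) S ∧ t' ∉ S)
    (hlt : t' < tmax)
    (hsecond : ∀ u : Fin n,
      (∃ S : Finset (Fin n), s ∈ S ∧ IsMinCutSet E (stitch1 w s) S ∧ u ∉ S) →
        u ≠ tmax → u ≤ t')
    (x : Fin n) (hx : x ≤ t') :
    (∀ S : Finset (Fin n), s ∈ S → IsMinCutSet E (stitch2 w s x) S →
        cutWeight E (ltWeight s x) S + 1 < (Finset.univ \ S).card) ∨
      (∃ A B : Finset (Fin n), s ∈ A ∧ s ∈ B ∧ IsMinCutSet E (stitch2 w s x) A ∧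
        IsMinCutSet E (stitch2 w s x) B ∧ A ≠ B) :=
  binary_search_case_two_general n E w s hstar tmax t' hmax ht' hlt x hx
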